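/- The effective Hamiltonian H(a) = lim_n Hₙ(a) is a convex function of a and satisfies min U ≤ H(a) − H₀(a) ≤ max U. -/

import Mathlib

open MeasureTheory

/-- An admissible trajectory from `(s,y)` to `(t,x)`: `ξ` is absolutely continuous on
`[s,t]` with (a.e.) derivative `g`, i.e. `ξ r = y + ∫_s^r g` on `[s,t]`, `g` being
interval integrable, and `ξ t = x` (so also `ξ s = y`). -/
def Admissible (s y t x : ℝ) (ξ g : ℝ → ℝ) : Prop :=
  IntervalIntegrable g volume s t ∧
  (∀ r ∈ Set.Icc s t, ξ r = y + ∫ τ in s..r, g τ) ∧ ξ t = x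

/-- The value function `L(s,y;t,x)`: the infimum of the action
`∫_s^t [L₀(ξ'(τ)) − U(τ,ξ(τ))] dτ` over admissible trajectories from `(s,y)` to `(t,x)`. -/
noncomputable def val (L0 : ℝ → ℝ) (U : ℝ → ℝ → ℝ) (s y t x : ℝ) : ℝ :=
  sInf { A | ∃ ξ g : ℝ → ℝ, Admissible s y t x ξ g ∧
    IntervalIntegrable (fun τ => L0 (g τ) - U τ (ξ τ)) volume s t ∧
    A = ∫ τ in s..t, (L0 (g τ) - U τ (ξ τ)) }

/-- The reduced `n`-step action `Lᵃₙ(y,x) = min_{k ∈ ℤ} (L(0,y+k;n,x) + a(y+k−x))`. -/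
noncomputable def Lan (L0 : ℝ → ℝ) (U : ℝ → ℝ → ℝ) (a : ℝ) (n : ℕ) (y x : ℝ) : ℝ :=
  sInf { c | ∃ k : ℤ, c = val L0 U 0 (y + k) n x + a * (y + k - x) }

/-- `Hₙ(a) = max_{(y,x)} (−n⁻¹ Lᵃₙ(y,x))`. -/
noncomputable def Hn (L0 : ℝ → ℝ) (U : ℝ → ℝ → ℝ) (a : ℝ) (n : ℕ) : ℝ :=
  sSup { h | ∃ y x : ℝ, h = -(1 / (n : ℝ)) * Lan L0 U a n y x }

/-!
Testing an admissible trajectory against a momentum `p` via the Fenchel–Young inequality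
`p v ≤ H₀ p + L₀ v` gives `L(0,y;n,x) ≥ p (x − y) − n (H₀ p + max U)`, while the straight line
of speed `v` gives `L(0,y;n,x) ≤ n (L₀ v − min U)`. Taking `p = a` yields `Hₙ(a) ≤ H₀(a) + max U`;
taking `v = H₀'(a)`, where Fenchel–Young is an equality because `H₀` is convex, yields
`Hₙ(a) ≥ H₀(a) + min U`. Since `Lᵃₙ(y,x)` is an infimum of functions affine in `a`, each `Hₙ` is
a supremum of convex functions, and convexity survives the pointwise limit.
-/

open Set Filter Topology

theorem convexOn_ciSup {E ι : Type*} [AddCommMonoid E] [Module ℝ E] [Nonempty ι] {s : Set E}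
    {f : ι → E → ℝ} (hf : ∀ i, ConvexOn ℝ s (f i))
    (hbdd : ∀ x ∈ s, BddAbove (range fun i => f i x)) :
    ConvexOn ℝ s fun x => ⨆ i, f i x := by
  refine ⟨(hf (Classical.arbitrary ι)).1, fun x hx y hy a b ha hb hab => ciSup_le fun i => ?_⟩
  calc f i (a • x + b • y) ≤ a • f i x + b • f i y := (hf i).2 hx hy ha hb hab
    _ ≤ a • (⨆ i, f i x) + b • ⨆ i, f i y := by
      gcongr
      exacts [le_ciSup (hbdd x hx) i, le_ciSup (hbdd y hy) i]

theorem concaveOn_ciInf {E ι : Type*} [AddCommMonoid E] [Module ℝ E] [Nonempty ι] {s : Set E}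
    {f : ι → E → ℝ} (hf : ∀ i, ConcaveOn ℝ s (f i))
    (hbdd : ∀ x ∈ s, BddBelow (range fun i => f i x)) :
    ConcaveOn ℝ s fun x => ⨅ i, f i x := by
  refine ⟨(hf (Classical.arbitrary ι)).1, fun x hx y hy a b ha hb hab => le_ciInf fun i => ?_⟩
  calc a • (⨅ i, f i x) + b • (⨅ i, f i y) ≤ a • f i x + b • f i y := by
        gcongr
        exacts [ciInf_le (hbdd x hx) i, ciInf_le (hbdd y hy) i]
    _ ≤ f i (a • x + b • y) := (hf i).2 hx hy ha hb hab

theorem convexOn_of_tendsto {E ι : Type*} [AddCommMonoid E] [Module ℝ E] {l : Filter ι}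
    [l.NeBot] {s : Set E} {f : ι → E → ℝ} {g : E → ℝ} (hs : Convex ℝ s)
    (hf : ∀ᶠ i in l, ConvexOn ℝ s (f i)) (hlim : ∀ x ∈ s, Tendsto (f · x) l (𝓝 (g x))) :
    ConvexOn ℝ s g := by
  refine ⟨hs, fun x hx y hy a b ha hb hab => ?_⟩
  have hcomb := ((hlim x hx).const_smul a).add ((hlim y hy).const_smul b)
  exact le_of_tendsto_of_tendsto (hlim _ (hs hx hy ha hb hab)) hcomb
    (hf.mono fun i hi => hi.2 hx hy ha hb hab)

theorem ConvexOn.add_deriv_mul_sub_le {f : ℝ → ℝ} (hf : ConvexOn ℝ univ f) {a : ℝ}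
    (hd : DifferentiableAt ℝ f a) (p : ℝ) : f a + deriv f a * (p - a) ≤ f p := by
  rcases lt_trichotomy p a with hpa | rfl | hap
  · have h := hf.slope_le_deriv (mem_univ p) (mem_univ a) hpa hd
    rw [slope_def_field, div_le_iff₀ (sub_pos.2 hpa)] at h
    nlinarith
  · simp
  · have h := hf.deriv_le_slope (mem_univ a) (mem_univ p) hap hd
    rw [slope_def_field, le_div_iff₀ (sub_pos.2 hap)] at h
    linarith

theorem bddAbove_range_mul_sub_of_superlinear {H : ℝ → ℝ} (hc : Continuous H)
    (hsup : ∀ N > (0 : ℝ), ∃ P > (0 : ℝ), ∀ p : ℝ, P < |p| → N * |p| < H p) (v : ℝ) :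
    BddAbove (range fun p => p * v - H p) := by
  obtain ⟨P, -, hP⟩ := hsup (|v| + 1) (by positivity)
  obtain ⟨C, hC⟩ := (isCompact_Icc (a := -P) (b := P)).bddAbove_image
    (f := fun p => p * v - H p) (by fun_prop)
  refine ⟨max 0 C, forall_mem_range.2 fun p => ?_⟩
  by_cases hp : P < |p|
  · have hpv : p * v ≤ |p| * |v| := (le_abs_self _).trans (abs_mul p v).le
    have := hP p hp
    exact le_max_of_le_left (by nlinarith [abs_nonneg p])
  · exact le_max_of_le_right (hC ⟨p, abs_le.1 (not_lt.1 hp), rfl⟩)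

theorem ConvexOn.isGreatest_range_mul_deriv_sub {H : ℝ → ℝ} (hH : ConvexOn ℝ univ H) {a : ℝ}
    (hd : DifferentiableAt ℝ H a) :
    IsGreatest (range fun p => p * deriv H a - H p) (a * deriv H a - H a) :=
  ⟨⟨a, rfl⟩, forall_mem_range.2 fun p => by have := hH.add_deriv_mul_sub_le hd p; linarith⟩

def actionSet (L0 : ℝ → ℝ) (U : ℝ → ℝ → ℝ) (s y t x : ℝ) : Set ℝ :=
  { A | ∃ ξ g : ℝ → ℝ, Admissible s y t x ξ g ∧
    IntervalIntegrable (fun τ => L0 (g τ) - U τ (ξ τ)) volume s t ∧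
    A = ∫ τ in s..t, (L0 (g τ) - U τ (ξ τ)) }

section Action

variable {L0 H0 : ℝ → ℝ} {U : ℝ → ℝ → ℝ} {s t y x m M : ℝ}

theorem le_of_mem_actionSet (hFY : ∀ p v, p * v - H0 p ≤ L0 v) (hM : ∀ t x, U t x ≤ M)
    (hst : s ≤ t) (p : ℝ) {A : ℝ} (hA : A ∈ actionSet L0 U s y t x) :
    p * (x - y) - (t - s) * (H0 p + M) ≤ A := by
  obtain ⟨ξ, g, ⟨hg, hξ, hξt⟩, hint, rfl⟩ := hA
  have hdisp : ∫ τ in s..t, g τ = x - y := by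
    have := hξ t ⟨hst, le_rfl⟩
    rw [hξt] at this
    linarith
  calc p * (x - y) - (t - s) * (H0 p + M) = ∫ τ in s..t, (p * g τ - (H0 p + M)) := by
        rw [intervalIntegral.integral_sub (hg.const_mul p) intervalIntegrable_const,
          intervalIntegral.integral_const_mul, hdisp, intervalIntegral.integral_const, smul_eq_mul]
    _ ≤ ∫ τ in s..t, (L0 (g τ) - U τ (ξ τ)) :=
        intervalIntegral.integral_mono_on hst ((hg.const_mul p).sub intervalIntegrable_const) hint
          fun τ _ => by linarith [hFY p (g τ), hM τ (ξ τ)]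

theorem bddBelow_actionSet (hFY : ∀ p v, p * v - H0 p ≤ L0 v) (hM : ∀ t x, U t x ≤ M)
    (hst : s ≤ t) : BddBelow (actionSet L0 U s y t x) :=
  ⟨_, fun _ hA => le_of_mem_actionSet hFY hM hst 0 hA⟩

theorem intervalIntegrable_sub_comp_affine (hU : Continuous (Function.uncurry U)) (c v : ℝ) :
    IntervalIntegrable (fun τ => c - U τ (y + (τ - s) * v)) volume s t :=
  (continuous_const.sub (hU.comp (by fun_prop : Continuous fun τ => (τ, y + (τ - s) * v))))
    |>.intervalIntegrable s t

theorem integral_affine_mem_actionSet (hU : Continuous (Function.uncurry U)) (hst : s < t) :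
    (∫ τ in s..t, (L0 ((x - y) / (t - s)) - U τ (y + (τ - s) * ((x - y) / (t - s)))))
      ∈ actionSet L0 U s y t x := by
  refine ⟨fun τ => y + (τ - s) * ((x - y) / (t - s)), fun _ => (x - y) / (t - s),
    ⟨intervalIntegrable_const, fun r _ => ?_, ?_⟩, intervalIntegrable_sub_comp_affine hU _ _, rfl⟩
  · simp only [intervalIntegral.integral_const, smul_eq_mul, mul_comm]
  · field_simp [sub_ne_zero.2 hst.ne']
    ring

theorem le_val (hFY : ∀ p v, p * v - H0 p ≤ L0 v) (hM : ∀ t x, U t x ≤ M)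
    (hU : Continuous (Function.uncurry U)) (hst : s < t) (p : ℝ) :
    p * (x - y) - (t - s) * (H0 p + M) ≤ val L0 U s y t x :=
  le_csInf ⟨_, integral_affine_mem_actionSet hU hst⟩
    fun _ hA => le_of_mem_actionSet hFY hM hst.le p hA

theorem val_le (hFY : ∀ p v, p * v - H0 p ≤ L0 v) (hM : ∀ t x, U t x ≤ M)
    (hm : ∀ t x, m ≤ U t x) (hU : Continuous (Function.uncurry U)) (hst : s < t) :
    val L0 U s y t x ≤ (t - s) * (L0 ((x - y) / (t - s)) - m) := by
  refine (csInf_le (bddBelow_actionSet hFY hM hst.le) (integral_affine_mem_actionSet hU hst)).trans ?_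
  calc _ ≤ ∫ _ in s..t, (L0 ((x - y) / (t - s)) - m) :=
        intervalIntegral.integral_mono_on hst.le (intervalIntegrable_sub_comp_affine hU _ _)
          intervalIntegrable_const fun τ _ => by linarith [hm τ (y + (τ - s) * ((x - y) / (t - s)))]
    _ = _ := by simp [mul_sub]

end Action

section Reduced

variable {L0 H0 : ℝ → ℝ} {U : ℝ → ℝ → ℝ} {m M : ℝ} {n : ℕ}

theorem Lan_eq_iInf (L0 : ℝ → ℝ) (U : ℝ → ℝ → ℝ) (a : ℝ) (n : ℕ) (y x : ℝ) :
    Lan L0 U a n y x = ⨅ k : ℤ, (val L0 U 0 (y + k) n x + a * (y + k - x)) := by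
  simp only [Lan, iInf, range, eq_comm]

theorem Hn_eq_iSup (L0 : ℝ → ℝ) (U : ℝ → ℝ → ℝ) (a : ℝ) (n : ℕ) :
    Hn L0 U a n = ⨆ q : ℝ × ℝ, -(1 / (n : ℝ)) * Lan L0 U a n q.1 q.2 := by
  simp only [Hn, iSup, range, Prod.exists, eq_comm]

theorem neg_mul_le_val_add_mul (hFY : ∀ p v, p * v - H0 p ≤ L0 v) (hM : ∀ t x, U t x ≤ M)
    (hU : Continuous (Function.uncurry U)) (hn : 0 < n) (a y x : ℝ) :
    -(n * (H0 a + M)) ≤ val L0 U 0 y n x + a * (y - x) := by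
  have := le_val hFY hM hU (s := 0) (t := n) (y := y) (x := x) (Nat.cast_pos.2 hn) a
  linarith

theorem bddBelow_range_val_add_mul (hFY : ∀ p v, p * v - H0 p ≤ L0 v) (hM : ∀ t x, U t x ≤ M)
    (hU : Continuous (Function.uncurry U)) (hn : 0 < n) (a y x : ℝ) :
    BddBelow (range fun k : ℤ => val L0 U 0 (y + k) n x + a * (y + k - x)) :=
  ⟨_, forall_mem_range.2 fun k => neg_mul_le_val_add_mul hFY hM hU hn a (y + k) x⟩

theorem neg_one_div_mul_Lan_le (hFY : ∀ p v, p * v - H0 p ≤ L0 v) (hM : ∀ t x, U t x ≤ M)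
    (hU : Continuous (Function.uncurry U)) (hn : 0 < n) (a y x : ℝ) :
    -(1 / (n : ℝ)) * Lan L0 U a n y x ≤ H0 a + M := by
  have hLan : -(n * (H0 a + M)) ≤ Lan L0 U a n y x :=
    (Lan_eq_iInf L0 U a n y x).symm ▸
      le_ciInf fun k => neg_mul_le_val_add_mul hFY hM hU hn a (y + k) x
  have hn' : (0 : ℝ) < n := Nat.cast_pos.2 hn
  calc -(1 / (n : ℝ)) * Lan L0 U a n y x ≤ -(1 / (n : ℝ)) * -(n * (H0 a + M)) :=
        mul_le_mul_of_nonpos_left hLan (by simp)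
    _ = H0 a + M := by field_simp

theorem bddAbove_range_neg_one_div_mul_Lan (hFY : ∀ p v, p * v - H0 p ≤ L0 v)
    (hM : ∀ t x, U t x ≤ M) (hU : Continuous (Function.uncurry U)) (hn : 0 < n) (a : ℝ) :
    BddAbove (range fun q : ℝ × ℝ => -(1 / (n : ℝ)) * Lan L0 U a n q.1 q.2) :=
  ⟨_, forall_mem_range.2 fun q => neg_one_div_mul_Lan_le hFY hM hU hn a q.1 q.2⟩

theorem Hn_le (hFY : ∀ p v, p * v - H0 p ≤ L0 v) (hM : ∀ t x, U t x ≤ M)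
    (hU : Continuous (Function.uncurry U)) (hn : 0 < n) (a : ℝ) :
    Hn L0 U a n ≤ H0 a + M :=
  (Hn_eq_iSup L0 U a n).symm ▸ ciSup_le fun q => neg_one_div_mul_Lan_le hFY hM hU hn a q.1 q.2

theorem le_Hn (hFY : ∀ p v, p * v - H0 p ≤ L0 v) (hM : ∀ t x, U t x ≤ M)
    (hm : ∀ t x, m ≤ U t x) (hU : Continuous (Function.uncurry U)) (hn : 0 < n) (a v : ℝ) :
    a * v - L0 v + m ≤ Hn L0 U a n := by
  have hn' : (0 : ℝ) < n := Nat.cast_pos.2 hn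
  have hLan : Lan L0 U a n 0 (n * v) ≤ n * (L0 v - m) - a * (n * v) := by
    rw [Lan_eq_iInf]
    refine (ciInf_le (bddBelow_range_val_add_mul hFY hM hU hn a 0 (n * v)) 0).trans ?_
    have := val_le hFY hM hm hU (y := 0) (x := n * v) hn'
    simp only [Int.cast_zero, add_zero, sub_zero, zero_sub] at this ⊢
    rw [mul_div_cancel_left₀ v hn'.ne'] at this
    linarith
  calc a * v - L0 v + m = -(1 / (n : ℝ)) * (n * (L0 v - m) - a * (n * v)) := by field_simp; ring
    _ ≤ -(1 / (n : ℝ)) * Lan L0 U a n 0 (n * v) := mul_le_mul_of_nonpos_left hLan (by simp)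
    _ ≤ Hn L0 U a n :=
        (Hn_eq_iSup L0 U a n).symm ▸
          le_ciSup (bddAbove_range_neg_one_div_mul_Lan hFY hM hU hn a) (0, n * v)

theorem concaveOn_Lan (hFY : ∀ p v, p * v - H0 p ≤ L0 v) (hM : ∀ t x, U t x ≤ M)
    (hU : Continuous (Function.uncurry U)) (hn : 0 < n) (y x : ℝ) :
    ConcaveOn ℝ univ fun a => Lan L0 U a n y x := by
  simp only [Lan_eq_iInf]
  refine concaveOn_ciInf (fun k => ?_) fun a _ => bddBelow_range_val_add_mul hFY hM hU hn a y x
  exact ⟨convex_univ, fun a _ b _ α β _ _ hαβ => le_of_eq (by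
    simp only [smul_eq_mul]; linear_combination (val L0 U 0 (y + k) n x) * hαβ)⟩

theorem convexOn_Hn (hFY : ∀ p v, p * v - H0 p ≤ L0 v) (hM : ∀ t x, U t x ≤ M)
    (hU : Continuous (Function.uncurry U)) (hn : 0 < n) :
    ConvexOn ℝ univ fun a => Hn L0 U a n := by
  simp only [Hn_eq_iSup]
  refine convexOn_ciSup (fun q => ?_) fun a _ => bddAbove_range_neg_one_div_mul_Lan hFY hM hU hn a
  refine ((concaveOn_Lan hFY hM hU hn q.1 q.2).neg.smul (c := 1 / (n : ℝ)) (by positivity)).congr ?_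
  intro a _
  simp

end Reduced

theorem effective_hamiltonian_convex_bounds_general
    (H0 L0 : ℝ → ℝ) (U : ℝ → ℝ → ℝ) (Heff : ℝ → ℝ) (m M : ℝ)
    (hH0 : ContDiff ℝ 1 H0)
    (hmono : StrictMono (deriv H0))
    (hsup : ∀ N > (0 : ℝ), ∃ P > (0 : ℝ), ∀ p : ℝ, P < |p| → N * |p| < H0 p)
    (hU : ContDiff ℝ 1 fun q : ℝ × ℝ => U q.1 q.2)
    (hL0 : ∀ v : ℝ, L0 v = sSup (Set.range fun p : ℝ => p * v - H0 p))
    (hm : (∀ t x : ℝ, m ≤ U t x) ∧ ∃ t x : ℝ, U t x = m)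
    (hM : (∀ t x : ℝ, U t x ≤ M) ∧ ∃ t x : ℝ, U t x = M)
    (hlim : ∀ a : ℝ, Filter.Tendsto (fun n : ℕ => Hn L0 U a n)
      Filter.atTop (nhds (Heff a))) :
    ConvexOn ℝ Set.univ Heff ∧
    ∀ a : ℝ, m ≤ Heff a - H0 a ∧ Heff a - H0 a ≤ M := by
  have hd : Differentiable ℝ H0 := hH0.differentiable one_ne_zero
  have hconv : ConvexOn ℝ univ H0 := hmono.monotone.convexOn_univ_of_deriv hd
  have hFY : ∀ p v, p * v - H0 p ≤ L0 v := fun p v =>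
    hL0 v ▸ le_csSup (bddAbove_range_mul_sub_of_superlinear hH0.continuous hsup v) ⟨p, rfl⟩
  have hUc : Continuous (Function.uncurry U) := hU.continuous
  have hpos : ∀ᶠ n : ℕ in atTop, 0 < n := eventually_gt_atTop 0
  refine ⟨convexOn_of_tendsto convex_univ (hpos.mono fun n hn => convexOn_Hn hFY hM.1 hUc hn)
    fun a _ => hlim a, fun a => ⟨?_, ?_⟩⟩
  · have hLeg : L0 (deriv H0 a) = a * deriv H0 a - H0 a :=
      (hL0 _).trans (hconv.isGreatest_range_mul_deriv_sub (hd a)).csSup_eq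
    have := ge_of_tendsto (hlim a)
      (hpos.mono fun n hn => le_Hn hFY hM.1 hm.1 hUc hn a (deriv H0 a))
    linarith
  · linarith [le_of_tendsto (hlim a) (hpos.mono fun n hn => Hn_le hFY hM.1 hUc hn a)]

/-- The effective Hamiltonian `H(a) = limₙ Hₙ(a)` is convex in `a` and
satisfies `min U ≤ H(a) − H₀(a) ≤ max U`. -/
theorem effective_hamiltonian_convex_bounds
    (H0 L0 : ℝ → ℝ) (U : ℝ → ℝ → ℝ) (Heff : ℝ → ℝ) (m M : ℝ)
    (hH0 : ContDiff ℝ 1 H0)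
    (hmono : StrictMono (deriv H0))
    (hloc : ∀ P > (0 : ℝ), ∃ C > (0 : ℝ), ∀ p₁ ∈ Set.Icc (-P) P, ∀ p₂ ∈ Set.Icc (-P) P,
      |deriv H0 p₁ - deriv H0 p₂| ≤ C * |p₁ - p₂|)
    (hsup : ∀ N > (0 : ℝ), ∃ P > (0 : ℝ), ∀ p : ℝ, P < |p| → N * |p| < H0 p)
    (hU : ContDiff ℝ 1 fun q : ℝ × ℝ => U q.1 q.2)
    (hUx : ∃ C > (0 : ℝ), ∀ t x₁ x₂ : ℝ, |deriv (U t) x₁ - deriv (U t) x₂| ≤ C * |x₁ - x₂|)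
    (hper : ∀ t x : ℝ, U (t + 1) x = U t x ∧ U t (x + 1) = U t x)
    (hL0 : ∀ v : ℝ, L0 v = sSup (Set.range fun p : ℝ => p * v - H0 p))
    (hm : (∀ t x : ℝ, m ≤ U t x) ∧ ∃ t x : ℝ, U t x = m)
    (hM : (∀ t x : ℝ, U t x ≤ M) ∧ ∃ t x : ℝ, U t x = M)
    (hlim : ∀ a : ℝ, Filter.Tendsto (fun n : ℕ => Hn L0 U a n)
      Filter.atTop (nhds (Heff a))) :
    ConvexOn ℝ Set.univ Heff ∧
    ∀ a : ℝ, m ≤ Heff a - H0 a ∧ Heff a - H0 a ≤ M :=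
  effective_hamiltonian_convex_bounds_general H0 L0 U Heff m M hH0 hmono hsup hU hL0 hm hM hlim
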